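/- arXiv:1801.04643 — 2 statements merged into one kernel-verified Lean document; each statement's English description precedes it below -/
import Mathlib

section
/- Let 0<|q|<1 and let s,t be positive integers. Then S(q^s; q^{-t}) = S(q^{s+t}; q^t), i.e. Σ_{n≥0}(1/(1-q^{s-tn}) - 1/(1-q^{-s-tn-t})) = Σ_{n≥0}(1/(1-q^{s+t+tn}) - 1/(1-q^{-s+tn})), provided all denominators are nonzero. -/
/-! The identity holds term by term: with `x = q ^ (s - t n)` and `y = q ^ (s + t + t n)`, the
`n`-th terms on the two sides are `1/(1-x) - 1/(1-y⁻¹)` and `1/(1-y) - 1/(1-x⁻¹)`, which agree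
because `1/(1-z) + 1/(1-z⁻¹) = 1` for every `z ∉ {0, 1}`. -/

theorem one_div_one_sub_add_one_div_one_sub_inv {K : Type*} [Field K] {z : K}
    (hz0 : z ≠ 0) (hz1 : z ≠ 1) : 1 / (1 - z) + 1 / (1 - z⁻¹) = 1 := by
  have hsub : 1 - z ≠ 0 := sub_ne_zero.mpr hz1.symm
  have hsub' : z - 1 ≠ 0 := sub_ne_zero.mpr hz1
  rw [show 1 - z⁻¹ = (z - 1) / z by field_simp]
  field_simp
  ring

theorem one_div_one_sub_zpow_sub_swap {K : Type*} [Field K] {q : K} (hq : q ≠ 0) {a b : ℤ}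
    (ha : q ^ a ≠ 1) (hb : q ^ b ≠ 1) :
    1 / (1 - q ^ a) - 1 / (1 - q ^ (-b)) = 1 / (1 - q ^ b) - 1 / (1 - q ^ (-a)) := by
  rw [zpow_neg, zpow_neg]
  linear_combination one_div_one_sub_add_one_div_one_sub_inv (zpow_ne_zero a hq) ha -
    one_div_one_sub_add_one_div_one_sub_inv (zpow_ne_zero b hq) hb

theorem stmt4_general (q : ℂ) (hq0 : 0 < ‖q‖) (s t : ℕ)
    (hst : ¬ t ∣ s)
    (hden : ∀ m : ℤ, m ≠ 0 → q ^ m ≠ 1) :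
    ∑' n : ℕ, (1 / (1 - q ^ ((s : ℤ) - t * n)) - 1 / (1 - q ^ (-(s : ℤ) - t * n - t)))
      = ∑' n : ℕ, (1 / (1 - q ^ ((s : ℤ) + t + t * n)) - 1 / (1 - q ^ (-(s : ℤ) + t * n))) := by
  have hs : s ≠ 0 := by rintro rfl; exact hst (dvd_zero t)
  refine tsum_congr fun n => ?_
  have hA : (s : ℤ) - t * n ≠ 0 := fun h => hst ⟨n, by exact_mod_cast sub_eq_zero.mp h⟩
  have hB : (s : ℤ) + t + t * n ≠ 0 := by exact_mod_cast (show s + t + t * n ≠ 0 by omega)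
  rw [show -(s : ℤ) - t * n - t = -(s + t + t * n) by ring,
    show -(s : ℤ) + t * n = -(s - t * n) by ring]
  exact one_div_one_sub_zpow_sub_swap (norm_pos_iff.mp hq0) (hden _ hA) (hden _ hB)

theorem stmt4 (q : ℂ) (hq0 : 0 < ‖q‖) (hq1 : ‖q‖ < 1) (s t : ℕ)
    (hs : 0 < s) (ht : 0 < t) (hst : ¬ t ∣ s)
    (hden : ∀ m : ℤ, m ≠ 0 → q ^ m ≠ 1) :
    ∑' n : ℕ, (1 / (1 - q ^ ((s : ℤ) - t * n)) - 1 / (1 - q ^ (-(s : ℤ) - t * n - t)))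
      = ∑' n : ℕ, (1 / (1 - q ^ ((s : ℤ) + t + t * n)) - 1 / (1 - q ^ (-(s : ℤ) + t * n))) :=
  stmt4_general q hq0 s t hst hden
end

section
/- For |q|<1, the identity Σ_{n∈ℤ} (-1)^n q^{n²+n}/(1+q^n)² = 2·Σ_{n∈ℤ} (-1)^n q^{n²+n}/(1+q^{3n})² − 4·Σ_{n∈ℤ} (-1)^n q^{n²+2n}/(1+q^{3n})² + 3·Σ_{n∈ℤ} (-1)^n q^{n²+3n}/(1+q^{3n})² holds. -/
/-!
Since `1 + x³ = (1 + x)(1 - x + x²)`, we have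
`1 / (1 + x)² = (1 - 2x + 3x² - 2x³ + x⁴) / (1 + x³)²`. Taking `x = qⁿ` splits the left-hand
series into the five series `∑ (-1)ⁿ q^(n² + kn) / (1 + q³ⁿ)²`, `k = 1, …, 5`. The substitution
`n ↦ -n` identifies the series for `k` and `6 - k`, so the terms for `k = 4, 5` merge with those
for `k = 2, 1`.
-/

section Algebra

variable {K : Type*} [Field K]

theorem inv_one_add_sq_eq_div_one_add_pow_three_sq {x : K} (hx : 1 + x ^ 3 ≠ 0) :
    ((1 + x) ^ 2)⁻¹ = (1 - 2 * x + 3 * x ^ 2 - 2 * x ^ 3 + x ^ 4) / (1 + x ^ 3) ^ 2 := by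
  have hx₁ : 1 + x ≠ 0 := fun h ↦ hx (by linear_combination (1 - x + x ^ 2) * h)
  field_simp
  ring

theorem zpow_neg_div_one_add_inv_pow_three_sq {x : K} (hx : x ≠ 0) (k : ℤ) :
    x ^ (-k) / (1 + x⁻¹ ^ 3) ^ 2 = x ^ (6 - k) / (1 + x ^ 3) ^ 2 := by
  have : (1 + x⁻¹ ^ 3) ^ 2 = (1 + x ^ 3) ^ 2 / x ^ (6 : ℤ) := by
    field_simp
    ring
  rw [this, div_div_eq_mul_div, ← zpow_add₀ hx, neg_add_eq_sub]

def cubeTerm (q : K) (k n : ℤ) : K :=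
  (-1) ^ n * q ^ (n ^ 2 + k * n) / (1 + q ^ (3 * n)) ^ 2

variable {q : K}

theorem cubeTerm_eq (hq : q ≠ 0) (k n : ℤ) :
    cubeTerm q k n = (-1) ^ n * q ^ (n ^ 2) * ((q ^ n) ^ k / (1 + (q ^ n) ^ 3) ^ 2) := by
  rw [cubeTerm, zpow_add₀ hq, ← zpow_mul, mul_comm n k, ← zpow_natCast (q ^ n) 3, ← zpow_mul,
    mul_comm n]
  push_cast
  ring

theorem cubeTerm_neg (hq : q ≠ 0) (k n : ℤ) : cubeTerm q k (-n) = cubeTerm q (6 - k) n := by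
  rw [cubeTerm_eq hq, cubeTerm_eq hq, neg_sq, zpow_neg, zpow_neg, ← inv_zpow, inv_neg_one,
    inv_zpow', zpow_neg_div_one_add_inv_pow_three_sq (zpow_ne_zero n hq)]

theorem div_one_add_zpow_sq_eq_cubeTerm_sum (hq : q ≠ 0) {n : ℤ} (h : 1 + q ^ (3 * n) ≠ 0) :
    (-1) ^ n * q ^ (n ^ 2 + n) / (1 + q ^ n) ^ 2 = cubeTerm q 1 n - 2 * cubeTerm q 2 n
      + 3 * cubeTerm q 3 n - 2 * cubeTerm q 4 n + cubeTerm q 5 n := by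
  rw [zpow_mul', zpow_ofNat] at h
  simp only [cubeTerm_eq hq, zpow_add₀ hq, div_eq_mul_inv,
    inv_one_add_sq_eq_div_one_add_pow_three_sq h, zpow_ofNat]
  ring

end Algebra

section Analysis

variable {K : Type*} [NormedField K] {q : K}

theorem one_add_zpow_ne_zero [CharZero K] (hq₀ : 0 < ‖q‖) (hq : ‖q‖ < 1) (m : ℤ) :
    1 + q ^ m ≠ 0 := by
  intro h
  have hm : ‖q‖ ^ m = 1 := by
    rw [← norm_zpow, eq_neg_of_add_eq_zero_right h, norm_neg, norm_one]
  rw [zpow_eq_one_iff_right₀ hq₀.le hq.ne] at hm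
  subst hm
  norm_num at h

theorem one_sub_norm_le_norm_one_add_zpow (hq₀ : q ≠ 0) (hq : ‖q‖ < 1) {m : ℤ} (hm : 1 ≤ m) :
    1 - ‖q‖ ≤ ‖1 + q ^ m‖ :=
  calc 1 - ‖q‖ ≤ ‖(1 : K)‖ - ‖-q ^ m‖ := by
        rw [norm_one, norm_neg, norm_zpow]
        gcongr
        simpa using zpow_le_zpow_right_of_le_one₀ (norm_pos_iff.mpr hq₀) hq.le hm
    _ ≤ ‖1 + q ^ m‖ := by simpa using norm_sub_norm_le (1 : K) (-q ^ m)

theorem norm_cubeTerm_le (hq₀ : q ≠ 0) (hq : ‖q‖ < 1) {k : ℤ} (hk : 1 ≤ k) {n : ℕ}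
    (hn : n ≠ 0) : ‖cubeTerm q k n‖ ≤ ‖q‖ ^ n / (1 - ‖q‖) ^ 2 := by
  have hn₁ : (1 : ℤ) ≤ n := by exact_mod_cast Nat.one_le_iff_ne_zero.mpr hn
  rw [cubeTerm, norm_div, norm_mul, norm_pow, norm_zpow, norm_zpow, norm_neg, norm_one, one_zpow,
    one_mul]
  gcongr
  · rw [← zpow_natCast]
    exact zpow_le_zpow_right_of_le_one₀ (norm_pos_iff.mpr hq₀) hq.le (by nlinarith)
  · exact one_sub_norm_le_norm_one_add_zpow hq₀ hq (by omega)

theorem tsum_cubeTerm_eq_of_add_eq_six (hq₀ : q ≠ 0) {k l : ℤ} (hkl : k + l = 6) :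
    ∑' n, cubeTerm q k n = ∑' n, cubeTerm q l n := by
  rw [← tsum_comp_neg]
  simp_rw [cubeTerm_neg hq₀, show 6 - k = l by omega]

variable [CompleteSpace K]

theorem summable_cubeTerm_natCast (hq₀ : q ≠ 0) (hq : ‖q‖ < 1) {k : ℤ} (hk : 1 ≤ k) :
    Summable fun n : ℕ ↦ cubeTerm q k n :=
  .of_norm_bounded_eventually ((summable_geometric_of_lt_one (norm_nonneg q) hq).div_const _)
    ((Filter.eventually_cofinite_ne 0).mono fun _ hn ↦ norm_cubeTerm_le hq₀ hq hk hn)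

theorem summable_cubeTerm (hq₀ : q ≠ 0) (hq : ‖q‖ < 1) {k : ℤ} (hk₁ : 1 ≤ k) (hk₅ : k ≤ 5) :
    Summable (cubeTerm q k) := by
  refine .of_nat_of_neg (summable_cubeTerm_natCast hq₀ hq hk₁) ?_
  simp_rw [cubeTerm_neg hq₀]
  exact summable_cubeTerm_natCast hq₀ hq (by omega)

end Analysis

theorem stmt16_general (q : ℂ) (hq0 : 0 < ‖q‖) (hq : ‖q‖ < 1) :
    (∑' n : ℤ, (-1 : ℂ) ^ n * q ^ (n ^ 2 + n) / (1 + q ^ n) ^ 2)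
      = 2 * (∑' n : ℤ, (-1 : ℂ) ^ n * q ^ (n ^ 2 + n) / (1 + q ^ (3 * n)) ^ 2)
        - 4 * (∑' n : ℤ, (-1 : ℂ) ^ n * q ^ (n ^ 2 + 2 * n) / (1 + q ^ (3 * n)) ^ 2)
        + 3 * (∑' n : ℤ, (-1 : ℂ) ^ n * q ^ (n ^ 2 + 3 * n) / (1 + q ^ (3 * n)) ^ 2) := by
  have hq₀ : q ≠ 0 := norm_pos_iff.mp hq0
  have hS (k : ℤ) (hk₁ : 1 ≤ k := by norm_num) (hk₅ : k ≤ 5 := by norm_num) :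
      HasSum (cubeTerm q k) (∑' n, cubeTerm q k n) :=
    (summable_cubeTerm hq₀ hq hk₁ hk₅).hasSum
  have hsum := ((((hS 1).sub ((hS 2).mul_left 2)).add ((hS 3).mul_left 3)).sub
    ((hS 4).mul_left 2)).add (hS 5)
  simp only [← div_one_add_zpow_sq_eq_cubeTerm_sum hq₀ (one_add_zpow_ne_zero hq0 hq _)] at hsum
  rw [hsum.tsum_eq, tsum_cubeTerm_eq_of_add_eq_six hq₀ (k := 4) (l := 2) (by norm_num),
    tsum_cubeTerm_eq_of_add_eq_six hq₀ (k := 5) (l := 1) (by norm_num)]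
  simp only [cubeTerm, one_mul]
  ring

theorem stmt16 (q : ℂ) (hq0 : 0 < ‖q‖) (hq : ‖q‖ < 1)
    (hden : ∀ m : ℤ, q ^ m ≠ -1) :
    (∑' n : ℤ, (-1 : ℂ) ^ n * q ^ (n ^ 2 + n) / (1 + q ^ n) ^ 2)
      = 2 * (∑' n : ℤ, (-1 : ℂ) ^ n * q ^ (n ^ 2 + n) / (1 + q ^ (3 * n)) ^ 2)
        - 4 * (∑' n : ℤ, (-1 : ℂ) ^ n * q ^ (n ^ 2 + 2 * n) / (1 + q ^ (3 * n)) ^ 2)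
        + 3 * (∑' n : ℤ, (-1 : ℂ) ^ n * q ^ (n ^ 2 + 3 * n) / (1 + q ^ (3 * n)) ^ 2) :=
  stmt16_general q hq0 hq
end
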